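/- Behavioural congruence of closed repetition-free PGA terms does not coincide with structural congruence: the terms +a;!;! and −a;!;! are behaviourally congruent (for all l, n, the threads extracted from #l;±a;!;!;!ⁿ coincide), but +a;!;! = −a;!;! is not derivable from the structural congruence axioms PGA1–PGA8, since the two terms denote distinct instruction sequences and PGA1–PGA8 preserve the denoted sequence up to resolving chained jumps and minimizing jumps into the repeating part—transformations that never change a test instruction into another. -/

import Mathlib

/-- Primitive instructions over a set `A` of basic instructions: plain
basic instructions, positive and negative tests, forward jumps, and the
termination instruction. -/
inductive PInstr (A : Type) where
  | basic : A → PInstr A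
  | ptst : A → PInstr A
  | ntst : A → PInstr A
  | jmp : ℕ → PInstr A
  | halt : PInstr A

/-- Closed BTA terms over basic actions `A`: inaction `D`, termination `S`,
and postconditional composition. -/
inductive BTA (A : Type) where
  | D : BTA A
  | S : BTA A
  | pcc : BTA A → A → BTA A → BTA A

open PInstr BTA

/-- Thread extraction (rules TE1–TE13) as a relation between non-empty
finite instruction sequences (lists of primitive instructions) and closed
BTA terms.  `a ∘ x` is `x ◁ a ▷ x`, i.e. `pcc x a x`. -/
inductive Extract {A : Type} : List (PInstr A) → BTA A → Prop where
  | te1 (a : A) : Extract [basic a] (pcc D a D)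
  | te2 (a : A) {X : List (PInstr A)} {x : BTA A} :
      X ≠ [] → Extract X x → Extract (basic a :: X) (pcc x a x)
  | te3 (a : A) : Extract [ptst a] (pcc D a D)
  | te4 (a : A) {X : List (PInstr A)} {x y : BTA A} :
      X ≠ [] → Extract X x → Extract (jmp 2 :: X) y →
      Extract (ptst a :: X) (pcc x a y)
  | te5 (a : A) : Extract [ntst a] (pcc D a D)
  | te6 (a : A) {X : List (PInstr A)} {x y : BTA A} :
      X ≠ [] → Extract X x → Extract (jmp 2 :: X) y →
      Extract (ntst a :: X) (pcc y a x)
  | te7 (l : ℕ) : Extract [jmp l] D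
  | te8 {X : List (PInstr A)} : X ≠ [] → Extract (jmp 0 :: X) D
  | te9 {X : List (PInstr A)} {x : BTA A} :
      X ≠ [] → Extract X x → Extract (jmp 1 :: X) x
  | te10 (l : ℕ) (u : PInstr A) : Extract [jmp (l + 2), u] D
  | te11 (l : ℕ) (u : PInstr A) {X : List (PInstr A)} {x : BTA A} :
      X ≠ [] → Extract (jmp (l + 1) :: X) x →
      Extract (jmp (l + 2) :: u :: X) x
  | te12 : Extract [(halt : PInstr A)] S
  | te13 {X : List (PInstr A)} : X ≠ [] → Extract (halt :: X) S

/-- A finite instruction sequence has chained jumps if some jump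
instruction `#(n+1)` jumps onto another jump instruction. -/
def HasChainedJumps {A : Type} (t : List (PInstr A)) : Prop :=
  ∃ i n l : ℕ, t[i]? = some (jmp (n + 1)) ∧ t[i + n + 1]? = some (jmp l)

/-- Left-hand sides of the repetition-free control-flow simplification
axioms PGA9–PGA25 (as finite instruction sequences). -/
inductive SimpLHS {A : Type} : List (PInstr A) → Prop where
  | p9 (a : A) : SimpLHS [ptst a, jmp 0, jmp 0]
  | p10 (a : A) : SimpLHS [ntst a, jmp 0, jmp 0]
  | p11 (a : A) : SimpLHS [ptst a, jmp 1]
  | p12 (a : A) : SimpLHS [ntst a, jmp 1]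
  | p13 (a : A) (l : ℕ) : SimpLHS [ptst a, jmp (l + 2), jmp (l + 1)]
  | p14 (a : A) (l : ℕ) : SimpLHS [ntst a, jmp (l + 2), jmp (l + 1)]
  | p15 (a : A) : SimpLHS [ptst a, halt, halt]
  | p16 (a : A) : SimpLHS [ntst a, halt, halt]
  | p19 (a : A) (us : List (PInstr A)) :
      SimpLHS ([jmp (us.length + 3), jmp (us.length + 3), jmp (us.length + 3)]
        ++ us ++ [ptst a])
  | p20 (a : A) (us : List (PInstr A)) :
      SimpLHS ([jmp (us.length + 3), jmp (us.length + 3), jmp (us.length + 3)]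
        ++ us ++ [ntst a])
  | p21 (a : A) (us : List (PInstr A)) :
      SimpLHS ([jmp (us.length + 2), jmp (us.length + 2)] ++ us ++ [basic a])
  | p22 (a : A) (us vs : List (PInstr A)) :
      SimpLHS (jmp (us.length + vs.length + 4) :: us
        ++ [ptst a, jmp (vs.length + 3), jmp (vs.length + 3)] ++ vs ++ [ptst a])
  | p23 (a : A) (us vs : List (PInstr A)) :
      SimpLHS (jmp (us.length + vs.length + 4) :: us
        ++ [ntst a, jmp (vs.length + 3), jmp (vs.length + 3)] ++ vs ++ [ntst a])
  | p24 (a : A) (us vs : List (PInstr A)) :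
      SimpLHS (jmp (us.length + vs.length + 3) :: us
        ++ [basic a, jmp (vs.length + 2)] ++ vs ++ [basic a])
  | p25 (us : List (PInstr A)) :
      SimpLHS (jmp (us.length + 1) :: us ++ [halt])

/-- A finite instruction sequence has simplifiable control flow if it
contains (up to associativity, i.e. as a contiguous segment) the left-hand
side of one of the axioms PGA9–PGA25. -/
def SimplifiableCF {A : Type} (t : List (PInstr A)) : Prop :=
  ∃ p m s : List (PInstr A), t = p ++ m ++ s ∧ SimpLHS m

/-- Third canonical form for finite (repetition-free) instruction
sequences: no chained jumps and no simplifiable control flow. -/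
def ThirdCF {A : Type} (t : List (PInstr A)) : Prop :=
  ¬ HasChainedJumps t ∧ ¬ SimplifiableCF t

/-- Behavioural equivalence of finite instruction sequences: the threads
extracted from them coincide. -/
def BEqL {A : Type} (s s' : List (PInstr A)) : Prop :=
  ∃ b : BTA A, Extract s b ∧ Extract s' b

/-- Behavioural congruence: `t ≅ t'` iff `#l ; t ; !ⁿ ≈ #l ; t' ; !ⁿ` for
all `l, n ∈ ℕ`. -/
def BCongL {A : Type} (t t' : List (PInstr A)) : Prop :=
  ∀ l n : ℕ, BEqL (jmp l :: (t ++ List.replicate n halt))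
    (jmp l :: (t' ++ List.replicate n halt))

/-- Closed PGA terms. -/
inductive ISTm (A : Type) where
  | ins : PInstr A → ISTm A
  | seq : ISTm A → ISTm A → ISTm A
  | rep : ISTm A → ISTm A

/-- `pw t n` is `t^{n+1}`. -/
def ISTm.pw {A : Type} (t : ISTm A) : ℕ → ISTm A
  | 0 => t
  | n + 1 => .seq t (t.pw n)

/-- `cat us t` is the term `u₁ ; ⋯ ; uₖ ; t` (right-associated). -/
def ISTm.cat {A : Type} : List (PInstr A) → ISTm A → ISTm A
  | [], t => t
  | u :: us, t => .seq (.ins u) (ISTm.cat us t)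

/-- `nel u us` is the right-associated term of the non-empty list
`u :: us`. -/
def ISTm.nel {A : Type} : PInstr A → List (PInstr A) → ISTm A
  | u, [] => .ins u
  | u, v :: vs => .seq (.ins u) (ISTm.nel v vs)

/-- Equational derivability from the structural congruence axioms
PGA1–PGA8. -/
inductive Deriv8 {A : Type} : ISTm A → ISTm A → Prop where
  | refl (t) : Deriv8 t t
  | symm {t t'} : Deriv8 t t' → Deriv8 t' t
  | trans {t t' t''} : Deriv8 t t' → Deriv8 t' t'' → Deriv8 t t''
  | seqCongr {s s' t t'} : Deriv8 s s' → Deriv8 t t' →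
      Deriv8 (.seq s t) (.seq s' t')
  | repCongr {t t'} : Deriv8 t t' → Deriv8 (.rep t) (.rep t')
  | pga1 (x y z) : Deriv8 (.seq (.seq x y) z) (.seq x (.seq y z))
  | pga2 (x) (n : ℕ) : Deriv8 (.rep (x.pw n)) (.rep x)
  | pga3 (x y) : Deriv8 (.seq (.rep x) y) (.rep x)
  | pga4 (x y) : Deriv8 (.rep (.seq x y)) (.seq x (.rep (.seq y x)))
  | pga5 (us : List (PInstr A)) :
      Deriv8 (.cat (jmp (us.length + 1) :: us) (.ins (jmp 0)))
        (.cat (jmp 0 :: us) (.ins (jmp 0)))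
  | pga6 (us : List (PInstr A)) (l : ℕ) :
      Deriv8 (.cat (jmp (us.length + 1) :: us) (.ins (jmp l)))
        (.cat (jmp (l + us.length + 1) :: us) (.ins (jmp l)))
  | pga7 (us : List (PInstr A)) (l : ℕ) :
      Deriv8 (.rep (.nel (jmp (l + us.length + 1)) us))
        (.rep (.nel (jmp l) us))
  | pga8 (us : List (PInstr A)) (v : PInstr A) (vs : List (PInstr A)) (l : ℕ) :
      Deriv8
        (.cat (jmp (l + us.length + vs.length + 2) :: us) (.rep (.nel v vs)))
        (.cat (jmp (l + us.length + 1) :: us) (.rep (.nel v vs)))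

/-! Behavioural congruence holds because a jump `#(l+2)` skips the test instruction and a jump
`#1` reaches it with `!;!` behind, where both branches terminate: `+a;!;!` and `−a;!;!` both
extract `S ◁ a ▷ S`. Structural congruence fails because PGA1–PGA8 can change the first
instruction of a term only by retargeting a jump, so a positive test never becomes a negative
one. -/

namespace Extract

variable {A : Type}

theorem halt_cons (X : List (PInstr A)) : Extract (halt :: X) S := by
  rcases X with _ | ⟨u, X⟩
  · exact te12
  · exact te13 (List.cons_ne_nil u X)

theorem exists_jmp_cons {X : List (PInstr A)}
    (hsuff : ∀ Y, Y <:+ X → Y ≠ [] → ∃ b, Extract Y b) (l : ℕ) (hX : X ≠ []) :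
    ∃ b, Extract (jmp l :: X) b := by
  induction l generalizing X with
  | zero => exact ⟨D, te8 hX⟩
  | succ l ih =>
    rcases l with _ | l
    · obtain ⟨x, hx⟩ := hsuff X (List.suffix_refl X) hX
      exact ⟨x, te9 hX hx⟩
    · rcases X with _ | ⟨u, _ | ⟨v, X⟩⟩
      · exact absurd rfl hX
      · exact ⟨D, te10 l u⟩
      · obtain ⟨x, hx⟩ := ih (X := v :: X)
          (fun Y hY => hsuff Y (hY.trans (List.suffix_cons u _))) (List.cons_ne_nil v X)
        exact ⟨x, te11 l u (List.cons_ne_nil v X) hx⟩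

theorem exists_of_ne_nil {X : List (PInstr A)} (hX : X ≠ []) : ∃ b, Extract X b := by
  suffices h : ∀ Y, Y <:+ X → Y ≠ [] → ∃ b, Extract Y b from h X (List.suffix_refl X) hX
  clear hX
  induction X with
  | nil => exact fun Y hY hY' => absurd (List.suffix_nil.mp hY) hY'
  | cons u X ih =>
    intro Y hY hY'
    rcases List.suffix_cons_iff.mp hY with rfl | hY
    · obtain rfl | hX := eq_or_ne X []
      · cases u
        exacts [⟨_, te1 _⟩, ⟨_, te3 _⟩, ⟨_, te5 _⟩, ⟨_, te7 _⟩, ⟨_, te12⟩]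
      obtain ⟨x, hx⟩ := ih X (List.suffix_refl X) hX
      obtain ⟨y, hy⟩ := exists_jmp_cons ih 2 hX
      cases u
      exacts [⟨_, te2 _ hX hx⟩, ⟨_, te4 _ hX hx hy⟩, ⟨_, te6 _ hX hx hy⟩,
        exists_jmp_cons ih _ hX, ⟨_, te13 hX⟩]
    · exact ih Y hY hY'

theorem ptst_halt_halt (a : A) (X : List (PInstr A)) :
    Extract (ptst a :: halt :: halt :: X) (pcc S a S) :=
  te4 a (List.cons_ne_nil _ _) (halt_cons _)
    (te11 0 halt (List.cons_ne_nil _ _) (te9 (List.cons_ne_nil _ _) (halt_cons X)))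

theorem ntst_halt_halt (a : A) (X : List (PInstr A)) :
    Extract (ntst a :: halt :: halt :: X) (pcc S a S) :=
  te6 a (List.cons_ne_nil _ _) (halt_cons _)
    (te11 0 halt (List.cons_ne_nil _ _) (te9 (List.cons_ne_nil _ _) (halt_cons X)))

end Extract

section BehaviouralCongruence

variable {A : Type}

theorem bEqL_jmp_add_two_cons (l : ℕ) (u u' : PInstr A) (X : List (PInstr A)) :
    BEqL (jmp (l + 2) :: u :: X) (jmp (l + 2) :: u' :: X) := by
  rcases X with _ | ⟨v, X⟩
  · exact ⟨D, .te10 l u, .te10 l u'⟩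
  · obtain ⟨x, hx⟩ := Extract.exists_of_ne_nil (List.cons_ne_nil (jmp (l + 1)) (v :: X))
    exact ⟨x, .te11 l u (List.cons_ne_nil v X) hx, .te11 l u' (List.cons_ne_nil v X) hx⟩

theorem bCongL_cons {u u' : PInstr A} {X : List (PInstr A)}
    (h : ∀ n, BEqL (u :: (X ++ List.replicate n halt)) (u' :: (X ++ List.replicate n halt))) :
    BCongL (u :: X) (u' :: X) := by
  intro l n
  match l with
  | 0 => exact ⟨D, .te8 (List.cons_ne_nil _ _), .te8 (List.cons_ne_nil _ _)⟩
  | 1 =>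
    obtain ⟨x, hx, hx'⟩ := h n
    exact ⟨x, .te9 (List.cons_ne_nil _ _) hx, .te9 (List.cons_ne_nil _ _) hx'⟩
  | l + 2 => exact bEqL_jmp_add_two_cons l u u' _

end BehaviouralCongruence

section StructuralCongruence

variable {A : Type}

def ISTm.head : ISTm A → PInstr A
  | .ins u => u
  | .seq s _ => s.head
  | .rep t => t.head

def PInstr.kind : PInstr A → PInstr A
  | jmp _ => jmp 0
  | u => u

@[simp]
theorem ISTm.head_pw (x : ISTm A) (n : ℕ) : (x.pw n).head = x.head := by
  cases n <;> rfl

@[simp]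
theorem ISTm.head_cat_cons (u : PInstr A) (us : List (PInstr A)) (t : ISTm A) :
    (ISTm.cat (u :: us) t).head = u := rfl

@[simp]
theorem ISTm.head_nel (u : PInstr A) (us : List (PInstr A)) : (ISTm.nel u us).head = u := by
  cases us <;> rfl

theorem Deriv8.kind_head_eq {t t' : ISTm A} (h : Deriv8 t t') :
    t.head.kind = t'.head.kind := by
  induction h with
  | refl | pga1 | pga3 | pga4 => rfl
  | symm _ ih => exact ih.symm
  | trans _ _ ih ih' => exact ih.trans ih'
  | seqCongr _ _ ih _ | repCongr _ ih => exact ih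
  | pga2 => simp [ISTm.head]
  | pga5 | pga6 | pga7 | pga8 => simp [ISTm.head, PInstr.kind]

end StructuralCongruence

/-- Behavioural congruence does not coincide with structural congruence:
`+a;!;!` and `−a;!;!` are behaviourally congruent, but their equality is
not derivable from the structural congruence axioms PGA1–PGA8. -/
theorem bcong_ne_scong {A : Type} (a : A) :
    BCongL [ptst a, halt, halt] [ntst a, halt, halt] ∧
    ¬ Deriv8 (ISTm.nel (ptst a) [halt, halt])
      (ISTm.nel (ntst a) [halt, halt]) := by
  refine ⟨bCongL_cons fun n => ⟨_, Extract.ptst_halt_halt a _, Extract.ntst_halt_halt a _⟩,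
    fun h => ?_⟩
  simpa [PInstr.kind] using h.kind_head_eq
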